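/- In the concrete BCH cube category □, the generalised symmetries form an isomorphism: for all I0 and I1, (sym_{I0,1}|id_{I1}) ∘ (sym_{1,I0}|id_{I1}) = id_{1+I0+I1} and (sym_{1,I0}|id_{I1}) ∘ (sym_{I0,1}|id_{I1}) = id_{I0+1+I1}. -/

import Mathlib

open CategoryTheory

namespace BCH

/-- The injectivity condition on the preimage of the left summand. -/
def IsCube {J I : ℕ} (f : Fin I → Fin J ⊕ Fin 2) : Prop :=
  ∀ ⦃i i' : Fin I⦄ ⦃j : Fin J⦄, f i = Sum.inl j → f i' = Sum.inl j → i = i'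

/-- A morphism of the BCH cube category `□(J,I)`. -/
def Hom (J I : ℕ) : Type :=
  {f : Fin I → Fin J ⊕ Fin 2 // IsCube f}

theorem Hom.ext {J I} {f g : Hom J I} (h : f.1 = g.1) : f = g := Subtype.ext h

/-- The identity morphism `id_I ∈ □(I,I)`. -/
def idH (I : ℕ) : Hom I I :=
  ⟨fun i => Sum.inl i, by intro i i' j h h'; simp_all⟩

/-- Composition: `compH f g` is the paper's `f ∘ g ∈ □(K,I)`,
`g ∈ □(K,J)` followed by `f ∈ □(J,I)`. -/
def compH {K J I : ℕ} (f : Hom J I) (g : Hom K J) : Hom K I :=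
  ⟨fun i => Sum.elim g.1 Sum.inr (f.1 i), by
    intro i i' k h h'
    dsimp only at h h'
    rcases hf : f.1 i with j | e
    · rcases hf' : f.1 i' with j' | e'
      · rw [hf] at h; rw [hf'] at h'
        simp only [Sum.elim_inl] at h h'
        have hjj : j = j' := g.2 h h'
        subst hjj
        exact f.2 hf hf'
      · rw [hf'] at h'; simp at h'
    · rw [hf] at h; simp at h⟩

/-- `suc f ∈ □(1+J,1+I)` for `f ∈ □(J,I)`. -/
def sucH {J I : ℕ} (f : Hom J I) : Hom (1+J) (1+I) :=
  ⟨fun i =>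
    if h : (i : ℕ) = 0 then Sum.inl ⟨0, by omega⟩
    else Sum.elim (fun j => Sum.inl ⟨1 + j.1, by have := j.2; omega⟩) Sum.inr
      (f.1 ⟨i.1 - 1, by have := i.2; omega⟩), by
    intro i i' j h h'
    dsimp only at h h'
    by_cases hi : (i : ℕ) = 0 <;> by_cases hi' : (i' : ℕ) = 0
    · exact Fin.ext (by omega)
    · rw [dif_pos hi] at h
      rw [dif_neg hi'] at h'
      rcases hf' : f.1 ⟨i'.1 - 1, by have := i'.2; omega⟩ with a | e <;> rw [hf'] at h'
      · simp only [Sum.elim_inl, Sum.inl.injEq] at h h'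
        rw [← h'] at h
        simp only [Sum.inl.injEq, Fin.ext_iff] at h
        omega
      · simp at h'
    · rw [dif_neg hi] at h
      rw [dif_pos hi'] at h'
      rcases hf : f.1 ⟨i.1 - 1, by have := i.2; omega⟩ with a | e <;> rw [hf] at h
      · simp only [Sum.elim_inl, Sum.inl.injEq] at h h'
        rw [← h'] at h
        simp only [Sum.inl.injEq, Fin.ext_iff] at h
        omega
      · simp at h
    · rw [dif_neg hi] at h
      rw [dif_neg hi'] at h'
      rcases hf : f.1 ⟨i.1 - 1, by have := i.2; omega⟩ with a | e <;> rw [hf] at h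
      · rcases hf' : f.1 ⟨i'.1 - 1, by have := i'.2; omega⟩ with a' | e' <;> rw [hf'] at h'
        · simp only [Sum.elim_inl, Sum.inl.injEq] at h h'
          rw [← h'] at h
          simp only [Fin.ext_iff] at h
          have haa : a = a' := Fin.ext (by omega)
          subst haa
          have := f.2 hf hf'
          simp only [Fin.ext_iff] at this
          exact Fin.ext (by omega)
        · simp at h'
      · simp at h⟩

/-- The face map `k_I ∈ □(I,1+I)` for an endpoint `k : Fin 2`. -/
def faceH (k : Fin 2) (I : ℕ) : Hom I (1+I) :=
  ⟨fun i =>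
    if h : (i : ℕ) = 0 then Sum.inr k
    else Sum.inl ⟨i.1 - 1, by have := i.2; omega⟩, by
    intro i i' j h h'
    dsimp only at h h'
    split_ifs at h h' with h1 h2 <;> simp_all [Fin.ext_iff] <;> omega⟩

/-- The degeneracy `R_I ∈ □(1+I,I)`. -/
def degH (I : ℕ) : Hom (1+I) I :=
  ⟨fun i => Sum.inl ⟨1 + i.1, by have := i.2; omega⟩, by
    intro i i' j h h'
    simp only [Sum.inl.injEq, Fin.ext_iff] at h h'
    exact Fin.ext (by omega)⟩

/-- The symmetry `S_I ∈ □(2+I,2+I)` (with `2+I` written as `1+(1+I)`). -/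
def symH (I : ℕ) : Hom (1+(1+I)) (1+(1+I)) :=
  ⟨fun i =>
    if (i : ℕ) = 0 then Sum.inl ⟨1, by omega⟩
    else if (i : ℕ) = 1 then Sum.inl ⟨0, by omega⟩
    else Sum.inl i, by
    intro i i' j h h'
    dsimp only at h h'
    split_ifs at h h' <;> simp only [Sum.inl.injEq, Fin.ext_iff] at h h' <;> apply Fin.ext <;> omega⟩

/-- Transport a morphism along equalities of objects. -/
def castH {J J' I I' : ℕ} (hJ : J = J') (hI : I = I') (f : Hom J I) : Hom J' I' := by
  subst hJ; subst hI; exact f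

/-- The generalised symmetry `(sym_{I0,1}|id_{I1}) ∈ □(I0+1+I1, 1+I0+I1)`. -/
def symL : (I0 I1 : ℕ) → Hom (I0+1+I1) (1+I0+I1)
  | 0, I1 => idH (1+I1)
  | I0+1, I1 =>
    castH (by omega) (by omega)
      (compH (symH (I0+I1)) (castH rfl (by omega) (sucH (symL I0 I1))))

/-- The generalised symmetry `(sym_{1,I0}|id_{I1}) ∈ □(1+I0+I1, I0+1+I1)`. -/
def symR : (I0 I1 : ℕ) → Hom (1+I0+I1) (I0+1+I1)
  | 0, I1 => idH (1+I1)
  | I0+1, I1 =>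
    castH (by omega) (by omega)
      (compH (castH (by omega) rfl (sucH (symR I0 I1))) (symH (I0+I1)))

theorem compH_val {K J I : ℕ} (f : Hom J I) (g : Hom K J) (i : Fin I) :
    (compH f g).1 i = Sum.elim g.1 Sum.inr (f.1 i) := rfl

theorem idH_val (I : ℕ) (i : Fin I) : (idH I).1 i = Sum.inl i := rfl

theorem sucH_val {J I : ℕ} (f : Hom J I) (i : Fin (1+I)) :
    (sucH f).1 i = if h : (i : ℕ) = 0 then Sum.inl ⟨0, by omega⟩
      else Sum.elim (fun j => Sum.inl ⟨1 + j.1, by have := j.2; omega⟩) Sum.inr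
        (f.1 ⟨i.1 - 1, by have := i.2; omega⟩) := rfl

theorem sucH_id (I : ℕ) : sucH (idH I) = idH (1+I) := by
  apply Hom.ext
  funext i
  rw [sucH_val, idH_val]
  split_ifs with h
  · exact congrArg Sum.inl (Fin.ext (by simp [h]))
  · rw [idH_val]
    simp only [Sum.elim_inl]
    exact congrArg Sum.inl (Fin.ext (by have := i.2; simp; omega))

theorem sucH_comp {K J I : ℕ} (f : Hom J I) (g : Hom K J) :
    sucH (compH f g) = compH (sucH f) (sucH g) := by
  apply Hom.ext
  funext i
  rw [compH_val, sucH_val, sucH_val]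
  split_ifs with h
  · rw [Sum.elim_inl, sucH_val]
    rw [dif_pos rfl]
  · rw [compH_val]
    rcases hf : f.1 ⟨i.1 - 1, by have := i.2; omega⟩ with j | e
    · simp only [Sum.elim_inl]
      rw [sucH_val, dif_neg (by simp)]
      have hj : (⟨(⟨1 + j.1, by have := j.2; omega⟩ : Fin (1+J)).1 - 1,
          by simp⟩ : Fin J) = j := Fin.ext (by simp)
      rw [hj]
    · simp only [Sum.elim_inr]

/-- The BCH cube category: objects are natural numbers. -/
def Obj : Type := ℕ

/-- View a natural number as an object of the BCH cube category. -/
def mk (n : ℕ) : Obj := n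

/-- View an object of the BCH cube category as a natural number. -/
def un (n : Obj) : ℕ := n

instance : Category Obj where
  Hom J I := BCH.Hom J I
  id I := idH I
  comp {X Y Z} (u : BCH.Hom X Y) (v : BCH.Hom Y Z) := compH v u
  id_comp := by
    intro X Y u
    apply Hom.ext
    funext i
    show Sum.elim (idH X).1 Sum.inr (u.1 i) = u.1 i
    rcases h : u.1 i with j | e <;> simp [h, idH]
  comp_id := by
    intro X Y u
    apply Hom.ext
    funext i
    rfl
  assoc := by
    intro W X Y Z u v w
    apply Hom.ext
    funext i
    show Sum.elim (fun j => Sum.elim u.1 Sum.inr (v.1 j)) Sum.inr (w.1 i)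
       = Sum.elim u.1 Sum.inr (Sum.elim v.1 Sum.inr (w.1 i))
    rcases h : w.1 i with j | e <;> simp

/-- The functor `suc : □ ⥤ □`. -/
def sucFunctor : Obj ⥤ Obj where
  obj I := mk (1 + un I)
  map {J I} f := sucH f
  map_id I := sucH_id (un I)
  map_comp {K J I} g f := sucH_comp f g

theorem faceH_val (k : Fin 2) (I : ℕ) (i : Fin (1+I)) :
    (faceH k I).1 i = if h : (i : ℕ) = 0 then Sum.inr k
      else Sum.inl ⟨i.1 - 1, by have := i.2; omega⟩ := rfl

theorem degH_val (I : ℕ) (i : Fin I) :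
    (degH I).1 i = Sum.inl ⟨1 + i.1, by have := i.2; omega⟩ := rfl

theorem symH_val (I : ℕ) (i : Fin (1+(1+I))) :
    (symH I).1 i = if (i : ℕ) = 0 then Sum.inl ⟨1, by omega⟩
      else if (i : ℕ) = 1 then Sum.inl ⟨0, by omega⟩
      else Sum.inl i := rfl

theorem face_nat {J I : ℕ} (f : Hom J I) (k : Fin 2) :
    compH (faceH k I) f = compH (sucH f) (faceH k J) := by
  apply Hom.ext
  funext i
  rw [compH_val, compH_val, faceH_val, sucH_val]
  split_ifs with h
  · simp only [Sum.elim_inr, Sum.elim_inl]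
    rw [faceH_val, dif_pos rfl]
  · simp only [Sum.elim_inl]
    rcases hf : f.1 ⟨i.1 - 1, by have := i.2; omega⟩ with j | e
    · simp only [Sum.elim_inl]
      rw [faceH_val, dif_neg (by simp)]
      exact congrArg Sum.inl (Fin.ext (by simp))
    · simp only [Sum.elim_inr]

theorem deg_nat {J I : ℕ} (f : Hom J I) :
    compH (degH I) (sucH f) = compH f (degH J) := by
  apply Hom.ext
  funext i
  rw [compH_val, compH_val, degH_val]
  simp only [Sum.elim_inl]
  rw [sucH_val, dif_neg (by simp)]
  have hi : (⟨((⟨1 + i.1, by have := i.2; omega⟩ : Fin (1+I)) : ℕ) - 1,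
      by exact (by have := i.2; omega : 1 + i.1 - 1 < I)⟩ : Fin I) = i :=
    Fin.ext (by simp)
  rw [hi]
  rcases hf : f.1 i with j | e
  · simp only [Sum.elim_inl]
    rw [degH_val]
  · simp only [Sum.elim_inr]

set_option maxHeartbeats 1000000 in
theorem sym_nat {J I : ℕ} (f : Hom J I) :
    compH (symH I) (sucH (sucH f)) = compH (sucH (sucH f)) (symH J) := by
  apply Hom.ext
  funext i
  rw [compH_val, compH_val, symH_val]
  by_cases h0 : (i : ℕ) = 0
  · rw [if_pos h0]
    have hv : (sucH (sucH f)).1 i = Sum.inl ⟨0, by omega⟩ := by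
      rw [sucH_val, dif_pos h0]
    have h2 : (sucH f).1 ⟨((⟨1, by omega⟩ : Fin (1+(1+I))) : ℕ) - 1,
        by exact (by omega : (1:ℕ) - 1 < 1 + I)⟩ = Sum.inl ⟨0, by omega⟩ := by
      rw [sucH_val, dif_pos (by simp)]
    have hv1 : (sucH (sucH f)).1 ⟨1, by omega⟩ = Sum.inl ⟨1, by omega⟩ := by
      rw [sucH_val, dif_neg (by simp), h2, Sum.elim_inl]
      exact congrArg Sum.inl (Fin.ext (by simp))
    rw [Sum.elim_inl, hv1, hv, Sum.elim_inl, symH_val, if_pos rfl]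
  · rw [if_neg h0]
    by_cases h1 : (i : ℕ) = 1
    · rw [if_pos h1]
      have h2 : (sucH f).1 ⟨i.1 - 1, by have := i.2; omega⟩ = Sum.inl ⟨0, by omega⟩ := by
        rw [sucH_val, dif_pos (by simp [h1])]
      have hv : (sucH (sucH f)).1 i = Sum.inl ⟨1, by omega⟩ := by
        rw [sucH_val, dif_neg h0, h2, Sum.elim_inl]
        exact congrArg Sum.inl (Fin.ext (by simp))
      have hv0 : (sucH (sucH f)).1 ⟨0, by omega⟩ = Sum.inl ⟨0, by omega⟩ := by
        rw [sucH_val, dif_pos (by simp)]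
      rw [Sum.elim_inl, hv0, hv, Sum.elim_inl, symH_val, if_neg (by simp), if_pos rfl]
    · rw [if_neg h1]
      have harg : (⟨((⟨i.1 - 1, by have := i.2; omega⟩ : Fin (1+I)) : ℕ) - 1,
          by exact (by have := i.2; omega : i.1 - 1 - 1 < I)⟩ : Fin I)
          = ⟨i.1 - 1 - 1, by have := i.2; omega⟩ :=
        Fin.ext (by simp)
      rcases hf : f.1 ⟨i.1 - 1 - 1, by have := i.2; omega⟩ with j | e
      · have h2 : (sucH f).1 ⟨i.1 - 1, by have := i.2; omega⟩
            = Sum.inl ⟨1 + j.1, by have := j.2; omega⟩ := by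
          rw [sucH_val, dif_neg (by exact (by omega : ¬(i.1 - 1 = 0))), harg, hf, Sum.elim_inl]
        have hv : (sucH (sucH f)).1 i
            = Sum.inl ⟨1 + (1 + j.1), by have := j.2; omega⟩ := by
          rw [sucH_val, dif_neg h0, h2, Sum.elim_inl]
        rw [Sum.elim_inl, hv, Sum.elim_inl, symH_val, if_neg (by simp), if_neg (by simp)]
      · have h2 : (sucH f).1 ⟨i.1 - 1, by have := i.2; omega⟩ = Sum.inr e := by
          rw [sucH_val, dif_neg (by exact (by omega : ¬(i.1 - 1 = 0))), harg, hf, Sum.elim_inr]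
        have hv : (sucH (sucH f)).1 i = Sum.inr e := by
          rw [sucH_val, dif_neg h0, h2, Sum.elim_inr]
        rw [Sum.elim_inl, hv, Sum.elim_inr]

/-- The face map as a morphism of the cube category. -/
def faceA (k : Fin 2) (I : ℕ) : mk I ⟶ mk (1+I) := faceH k I

/-- The degeneracy as a morphism of the cube category. -/
def degA (I : ℕ) : mk (1+I) ⟶ mk I := degH I

/-- The symmetry as a morphism of the cube category. -/
def symA (I : ℕ) : mk (1+(1+I)) ⟶ mk (1+(1+I)) := symH I

theorem faceA_nat {J I : ℕ} (f : mk J ⟶ mk I) (k : Fin 2) :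
    f ≫ faceA k I = faceA k J ≫ sucFunctor.map f := face_nat f k

theorem degA_nat {J I : ℕ} (f : mk J ⟶ mk I) :
    sucFunctor.map f ≫ degA I = degA J ≫ f := deg_nat f

theorem symA_nat {J I : ℕ} (f : mk J ⟶ mk I) :
    sucFunctor.map (sucFunctor.map f) ≫ symA I = symA J ≫ sucFunctor.map (sucFunctor.map f) :=
  sym_nat f

/-- The precomposition endofunctor `∀̂` on presheaves over the BCH cube category. -/
def forallP : (Objᵒᵖ ⥤ Type) ⥤ (Objᵒᵖ ⥤ Type) :=
  (Functor.whiskeringLeft Objᵒᵖ Objᵒᵖ Type).obj sucFunctor.op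

/-- The natural transformation `k̂_Γ : ∀̂Γ ⟶ Γ`. -/
def kHat (k : Fin 2) (Γ : Objᵒᵖ ⥤ Type) : forallP.obj Γ ⟶ Γ where
  app X := Γ.map ((faceA k (un X.unop)).op)
  naturality := by
    intro X Y g
    show Γ.map (sucFunctor.map g.unop).op ≫ Γ.map (faceA k (un Y.unop)).op
        = Γ.map (faceA k (un X.unop)).op ≫ Γ.map g
    erw [← Γ.map_comp, ← Γ.map_comp]
    congr 1
    have h := congrArg Quiver.Hom.op (faceA_nat g.unop k)
    exact h.symm

/-- The natural transformation `R̂_Γ : Γ ⟶ ∀̂Γ`. -/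
def RHat (Γ : Objᵒᵖ ⥤ Type) : Γ ⟶ forallP.obj Γ where
  app X := Γ.map ((degA (un X.unop)).op)
  naturality := by
    intro X Y g
    show Γ.map g ≫ Γ.map (degA (un Y.unop)).op
        = Γ.map (degA (un X.unop)).op ≫ Γ.map (sucFunctor.map g.unop).op
    have h := congrArg Quiver.Hom.op (degA_nat g.unop)
    exact (Γ.map_comp _ _).symm.trans ((congrArg Γ.map h.symm).trans (Γ.map_comp _ _))

/-- The natural transformation `Ŝ_Γ : ∀̂∀̂Γ ⟶ ∀̂∀̂Γ`. -/
def SHat (Γ : Objᵒᵖ ⥤ Type) : forallP.obj (forallP.obj Γ) ⟶ forallP.obj (forallP.obj Γ) where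
  app X := Γ.map ((symA (un X.unop)).op)
  naturality := by
    intro X Y g
    show Γ.map (sucFunctor.map (sucFunctor.map g.unop)).op ≫ Γ.map (symA (un Y.unop)).op
        = Γ.map (symA (un X.unop)).op ≫ Γ.map (sucFunctor.map (sucFunctor.map g.unop)).op
    have h := congrArg Quiver.Hom.op (symA_nat g.unop)
    exact (Γ.map_comp _ _).symm.trans ((congrArg Γ.map h.symm).trans (Γ.map_comp _ _))

/-! Induction on `I0`: the two symmetries of size `I0+1` are `S ∘ suc σ` and `suc τ ∘ S` for
those of size `I0`, so their composites collapse by functoriality of `suc`, the induction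
hypothesis and `S ∘ S = id`. -/

theorem castH_idH {I I' : ℕ} (h : I = I') : castH h h (idH I) = idH I' := by
  subst h; rfl

theorem castH_castH {J J' J'' I I' I'' : ℕ} (hJ : J = J') (hJ' : J' = J'') (hI : I = I')
    (hI' : I' = I'') (f : Hom J I) :
    castH hJ' hI' (castH hJ hI f) = castH (hJ.trans hJ') (hI.trans hI') f := by
  subst hJ hJ' hI hI'; rfl

theorem compH_castH {K K' J J' I I' : ℕ} (hK : K = K') (hJ : J = J') (hI : I = I')
    (f : Hom J I) (g : Hom K J) :
    compH (castH hJ hI f) (castH hK hJ g) = castH hK hI (compH f g) := by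
  subst hK hJ hI; rfl

theorem compH_assoc {L K J I : ℕ} (f : Hom J I) (g : Hom K J) (h : Hom L K) :
    compH (compH f g) h = compH f (compH g h) :=
  (Category.assoc (obj := Obj) h g f).symm

theorem idH_compH {J I : ℕ} (f : Hom J I) : compH (idH I) f = f :=
  Category.comp_id (obj := Obj) f

theorem compH_idH {J I : ℕ} (f : Hom J I) : compH f (idH J) = f :=
  Category.id_comp (obj := Obj) f

theorem compH_symH_symH (I : ℕ) : compH (symH I) (symH I) = idH (1+(1+I)) := by
  apply Hom.ext
  funext i
  rw [compH_val, symH_val, idH_val]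
  split_ifs with h0 h1 <;> rw [Sum.elim_inl, symH_val]
  · rw [if_neg one_ne_zero, if_pos rfl]
    exact congrArg Sum.inl (Fin.ext h0.symm)
  · rw [if_pos rfl]
    exact congrArg Sum.inl (Fin.ext h1.symm)
  · rw [if_neg h0, if_neg h1]

theorem compH_symL_symR (I0 I1 : ℕ) : compH (symL I0 I1) (symR I0 I1) = idH (1+I0+I1) := by
  induction I0 with
  | zero => exact compH_idH _
  | succ I0 ih =>
    simp only [symL, symR]
    rw [compH_castH, compH_assoc, ← compH_assoc (castH _ _ _), compH_castH, ← sucH_comp, ih,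
      sucH_id, castH_idH, idH_compH, compH_symH_symH, castH_idH]

theorem compH_symR_symL (I0 I1 : ℕ) : compH (symR I0 I1) (symL I0 I1) = idH (I0+1+I1) := by
  induction I0 with
  | zero => exact compH_idH _
  | succ I0 ih =>
    simp only [symL, symR]
    rw [compH_castH, compH_assoc, ← compH_assoc (symH _), compH_symH_symH, idH_compH,
      compH_castH, ← sucH_comp, ih, sucH_id, castH_castH, castH_idH]

/-- the generalised symmetries form an isomorphism. -/
theorem symL_symR_iso :
    ∀ I0 I1 : ℕ,
      compH (symL I0 I1) (symR I0 I1) = idH (1+I0+I1) ∧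
      compH (symR I0 I1) (symL I0 I1) = idH (I0+1+I1) :=
  fun I0 I1 => ⟨compH_symL_symR I0 I1, compH_symR_symL I0 I1⟩

end BCH
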